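/- Let δ = δ_0 + uδ_1 + ⋯ + u^{t−1}δ_{t−1} ∈ R^t be a unit such that x^n − δ_{0,0} is an irreducible polynomial over F and δ_1 ≠ 0. Then for each 0 ≤ i ≤ tp^s, the ideal ⟨(x^n − δ_{0,0})^i⟩ of R^{t,n}_δ has exactly p^{nm(tp^s − i)} elements. -/

import Mathlib

open Polynomial

/-- The finite chain ring `R^t = 𝔽_{p^m}[u]/⟨u^t⟩`. -/
abbrev Rt (p m t : ℕ) [Fact p.Prime] : Type _ :=
  Polynomial (GaloisField p m) ⧸ Ideal.span {(X : Polynomial (GaloisField p m)) ^ t}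

noncomputable instance instCommRingRt (p m t : ℕ) [Fact p.Prime] : CommRing (Rt p m t) :=
  inferInstance

noncomputable def mkRt (p m t : ℕ) [Fact p.Prime] :
    Polynomial (GaloisField p m) →+* Rt p m t :=
  Ideal.Quotient.mk _

/-- The element `u ∈ R^t`. -/
noncomputable def uRt (p m t : ℕ) [Fact p.Prime] : Rt p m t := mkRt p m t X

/-- The canonical embedding `𝔽_{p^m} → R^t`. -/
noncomputable def κ (p m t : ℕ) [Fact p.Prime] : GaloisField p m →+* Rt p m t :=
  (mkRt p m t).comp (C : GaloisField p m →+* Polynomial (GaloisField p m))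

/-- The quotient ring `R^t[x]/⟨x^N − δ⟩`. -/
abbrev Qr (p m t : ℕ) [Fact p.Prime] (N : ℕ) (δ : Rt p m t) : Type _ :=
  Polynomial (Rt p m t) ⧸ Ideal.span {(X : Polynomial (Rt p m t)) ^ N - C δ}

noncomputable def mkQr (p m t : ℕ) [Fact p.Prime] (N : ℕ) (δ : Rt p m t) :
    Polynomial (Rt p m t) →+* Qr p m t N δ :=
  Ideal.Quotient.mk _

/-! Write `z` for the class of `xⁿ − δ_{0,0}` in `A = R^{t,n}_δ` and `q = p^{nm}`, so that
`|A| = q^{tp^s}`. By Frobenius `z^{p^s} = δ − δ₀`, and `δ − δ₀` is `u` times a unit because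
`δ₁ ≠ 0`. Hence `z^{tp^s} = 0` and `u ∈ ⟨z⟩`, so `A/⟨z⟩` is a quotient of
`𝔽_{p^m}[x]/⟨xⁿ − δ_{0,0}⟩` and has at most `q` elements.

In any finite ring with `|A| = q^T`, `z^T = 0` and `|A/⟨z⟩| ≤ q`, multiplication by `z^j` maps
`A/⟨z⟩` onto `⟨z^j⟩/⟨z^{j+1}⟩`, so `[A : ⟨z^i⟩] ≤ q^i`, i.e. `|⟨z^i⟩| ≥ q^{T-i}`.
Conversely `⟨z^{T-i}⟩` lies in the annihilator of `z^i`, so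
`|⟨z^i⟩| = [A : ann z^i] ≤ [A : ⟨z^{T-i}⟩] ≤ q^{T-i}`.
-/

theorem Ideal.index_span_singleton_pow_le {A : Type*} [CommRing A] (z : A)
    [Finite (A ⧸ Ideal.span {z})] (n : ℕ) :
    (Ideal.span {z ^ n}).toAddSubgroup.index ≤ (Ideal.span {z}).toAddSubgroup.index ^ n := by
  have h := Ideal.index_pow_le {z} (by rw [Finset.coe_singleton]) n
  rw [Finset.card_singleton] at h
  simp only [one_pow, Finset.sum_const, Finset.card_range, smul_eq_mul, mul_one] at h
  rwa [Ideal.span_singleton_pow] at h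

theorem Ideal.natCard_span_singleton_pow_of_pow_eq_zero {A : Type*} [CommRing A] [Finite A]
    {z : A} {q T : ℕ} (hA : Nat.card A = q ^ T) (hzT : z ^ T = 0)
    (hq : Nat.card (A ⧸ Ideal.span {z}) ≤ q) {i : ℕ} (hi : i ≤ T) :
    Nat.card (Ideal.span {z ^ i}) = q ^ (T - i) := by
  have : Finite (A ⧸ Ideal.span {z}) := Finite.of_surjective _ Ideal.Quotient.mk_surjective
  have hindex (j : ℕ) : (Ideal.span {z ^ j}).toAddSubgroup.index ≤ q ^ j :=
    (Ideal.index_span_singleton_pow_le z j).trans <|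
      Nat.pow_le_pow_left (by rw [AddSubgroup.index_eq_card]; exact hq) j
  have hrange : (AddMonoidHom.mulLeft (z ^ i)).range = (Ideal.span {z ^ i}).toAddSubgroup := by
    ext x
    simp [Ideal.mem_span_singleton', mul_comm]
  have hker : (Ideal.span {z ^ (T - i)}).toAddSubgroup ≤ (AddMonoidHom.mulLeft (z ^ i)).ker := by
    intro x hx
    obtain ⟨c, rfl⟩ := Ideal.mem_span_singleton.mp hx
    simp [← mul_assoc, ← pow_add, Nat.add_sub_cancel' hi, hzT]
  have hupper : Nat.card (Ideal.span {z ^ i}) ≤ q ^ (T - i) := calc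
    Nat.card (Ideal.span {z ^ i}) = (AddMonoidHom.mulLeft (z ^ i)).ker.index := by
      rw [AddSubgroup.index_ker, hrange]
      rfl
    _ ≤ (Ideal.span {z ^ (T - i)}).toAddSubgroup.index :=
      Nat.le_of_dvd (Nat.pos_of_ne_zero AddSubgroup.index_ne_zero_of_finite)
        (AddSubgroup.index_dvd_of_le hker)
    _ ≤ q ^ (T - i) := hindex _
  have hlower : q ^ (T - i) * q ^ i ≤ Nat.card (Ideal.span {z ^ i}) * q ^ i := calc
    q ^ (T - i) * q ^ i = Nat.card A := by rw [← pow_add, Nat.sub_add_cancel hi, hA]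
    _ = Nat.card (Ideal.span {z ^ i}) * (Ideal.span {z ^ i}).toAddSubgroup.index :=
      (AddSubgroup.card_mul_index (Ideal.span {z ^ i}).toAddSubgroup).symm
    _ ≤ Nat.card (Ideal.span {z ^ i}) * q ^ i := Nat.mul_le_mul_left _ (hindex i)
  have hq_pos : 0 < q := Nat.card_pos.trans_le hq
  exact hupper.antisymm (Nat.le_of_mul_le_mul_right hlower (pow_pos hq_pos i))

theorem AdjoinRoot.finite_of_monic {R : Type*} [CommRing R] [Finite R] {g : R[X]}
    (hg : g.Monic) : Finite (AdjoinRoot g) :=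
  have := hg.finite_adjoinRoot
  Module.finite_of_finite R

theorem AdjoinRoot.natCard_of_monic {R : Type*} [CommRing R] [Finite R] {g : R[X]}
    (hg : g.Monic) : Nat.card (AdjoinRoot g) = Nat.card R ^ g.natDegree := by
  rw [Nat.card_congr (AdjoinRoot.powerBasis' hg).basis.equivFun.toEquiv, Nat.card_fun]
  simp [Nat.card_eq_fintype_card]

section ChainRing

variable {p m t : ℕ} [Fact p.Prime]

instance finite_Rt : Finite (Rt p m t) :=
  AdjoinRoot.finite_of_monic (monic_X_pow t)

theorem nontrivial_Rt (ht : t ≠ 0) : Nontrivial (Rt p m t) :=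
  Ideal.Quotient.nontrivial_iff.mpr <| by
    rw [Ne, Ideal.span_singleton_eq_top, isUnit_pow_iff ht]
    exact not_isUnit_X

theorem natCard_Rt (hm : m ≠ 0) : Nat.card (Rt p m t) = p ^ (m * t) := by
  refine (AdjoinRoot.natCard_of_monic (monic_X_pow t)).trans ?_
  rw [natDegree_X_pow, GaloisField.card p m hm, pow_mul]

theorem uRt_pow_eq_zero : uRt p m t ^ t = 0 :=
  (map_pow (mkRt p m t) X t).symm.trans
    (Ideal.Quotient.eq_zero_iff_mem.mpr (Ideal.mem_span_singleton_self _))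

theorem mkRt_eq_uRt_mul_add_κ (q : (GaloisField p m)[X]) :
    mkRt p m t q = uRt p m t * mkRt p m t q.divX + κ p m t (q.coeff 0) := by
  conv_lhs => rw [← X_mul_divX_add q]
  rw [map_add, map_mul]
  rfl

theorem exists_uRt_dvd_sub_κ (r : Rt p m t) : ∃ c, uRt p m t ∣ r - κ p m t c := by
  obtain ⟨q, rfl⟩ := Ideal.Quotient.mk_surjective r
  exact ⟨q.coeff 0, _, by rw [← sub_eq_of_eq_add (mkRt_eq_uRt_mul_add_κ q)]; rfl⟩

theorem associated_uRt_sub_κ_coeff_zero {q : (GaloisField p m)[X]} (hq : q.coeff 1 ≠ 0) :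
    Associated (uRt p m t) (mkRt p m t q - κ p m t (q.coeff 0)) := by
  have hunit : IsUnit (mkRt p m t q.divX) := by
    rw [mkRt_eq_uRt_mul_add_κ, coeff_divX, zero_add]
    refine IsNilpotent.isUnit_add_right_of_commute ?_ (hq.isUnit.map _) (Commute.all _ _)
    exact ⟨t, by rw [mul_pow, uRt_pow_eq_zero, zero_mul]⟩
  exact ⟨hunit.unit, by rw [IsUnit.unit_spec, mkRt_eq_uRt_mul_add_κ q, add_sub_cancel_right]⟩

theorem exists_C_uRt_dvd_sub_map (P : (Rt p m t)[X]) :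
    ∃ Q : (GaloisField p m)[X], C (uRt p m t) ∣ P - Q.map (κ p m t) := by
  induction P using Polynomial.induction_on' with
  | add P₁ P₂ h₁ h₂ =>
    obtain ⟨Q₁, hQ₁⟩ := h₁
    obtain ⟨Q₂, hQ₂⟩ := h₂
    exact ⟨Q₁ + Q₂, by simpa [Polynomial.map_add, add_sub_add_comm] using dvd_add hQ₁ hQ₂⟩
  | monomial k a =>
    obtain ⟨c, hc⟩ := exists_uRt_dvd_sub_κ a
    refine ⟨monomial k c, ?_⟩
    rw [Polynomial.map_monomial, ← monomial_sub, ← C_mul_X_pow_eq_monomial]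
    exact dvd_mul_of_dvd_left (map_dvd C hc) _

noncomputable instance instCommRingQr {N : ℕ} {δ : Rt p m t} : CommRing (Qr p m t N δ) :=
  Ideal.Quotient.commRing _

theorem mkQr_X_pow_sub_C_pow {n s : ℕ} (δ : Rt p m t) {a b : GaloisField p m}
    (hab : a ^ p ^ s = b) :
    mkQr p m t (n * p ^ s) δ (X ^ n - C (κ p m t a)) ^ p ^ s =
      mkQr p m t (n * p ^ s) δ (C (δ - κ p m t b)) := by
  have hfrob : ((X : (GaloisField p m)[X]) ^ n - C a) ^ p ^ s = X ^ (n * p ^ s) - C b := by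
    rw [sub_pow_char_pow, ← pow_mul, ← C_pow, hab]
  have hsplit : (X ^ (n * p ^ s) - C (κ p m t b) : (Rt p m t)[X]) =
      (X ^ (n * p ^ s) - C δ) + C (δ - κ p m t b) := by
    rw [C_sub]; ring
  have hzero : mkQr p m t (n * p ^ s) δ (X ^ (n * p ^ s) - C δ) = 0 :=
    Ideal.Quotient.eq_zero_iff_mem.mpr (Ideal.mem_span_singleton_self _)
  rw [← map_pow, show (X ^ n - C (κ p m t a) : (Rt p m t)[X]) = (X ^ n - C a).map (κ p m t) by
    simp, ← Polynomial.map_pow, hfrob, Polynomial.map_sub, Polynomial.map_pow, map_X, map_C,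
    hsplit, map_add, hzero, zero_add]

theorem mkQr_X_pow_sub_C_pow_eq_zero {n s : ℕ} (δ : Rt p m t) {a b : GaloisField p m}
    (hab : a ^ p ^ s = b) (hδ : uRt p m t ∣ δ - κ p m t b) :
    mkQr p m t (n * p ^ s) δ (X ^ n - C (κ p m t a)) ^ (t * p ^ s) = 0 := by
  obtain ⟨v, hv⟩ := hδ
  rw [pow_mul', mkQr_X_pow_sub_C_pow δ hab, ← map_pow, ← map_pow, hv, mul_pow,
    uRt_pow_eq_zero, zero_mul, map_zero, map_zero]

theorem mkQr_X_pow_sub_C_dvd_uRt {n s : ℕ} (δ : Rt p m t) {a b : GaloisField p m}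
    (hab : a ^ p ^ s = b) (hδ : δ - κ p m t b ∣ uRt p m t) :
    mkQr p m t (n * p ^ s) δ (X ^ n - C (κ p m t a)) ∣
      mkQr p m t (n * p ^ s) δ (C (uRt p m t)) := by
  obtain ⟨v, hv⟩ := hδ
  rw [hv, C_mul, map_mul, ← mkQr_X_pow_sub_C_pow δ hab]
  exact (dvd_pow_self _ (pow_ne_zero s (Fact.out : p.Prime).ne_zero)).mul_right _

theorem natCard_quotient_span_mkQr_X_pow_sub_C_le (hm : m ≠ 0) {n : ℕ} (hn : n ≠ 0) {N : ℕ}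
    {δ : Rt p m t} {a : GaloisField p m}
    (hu : mkQr p m t N δ (X ^ n - C (κ p m t a)) ∣ mkQr p m t N δ (C (uRt p m t))) :
    Nat.card (Qr p m t N δ ⧸ Ideal.span {mkQr p m t N δ (X ^ n - C (κ p m t a))}) ≤
      p ^ (n * m) := by
  set z := mkQr p m t N δ (X ^ n - C (κ p m t a))
  have hmap : (X ^ n - C a).map (κ p m t) = X ^ n - C (κ p m t a) := by simp
  let ψ : (GaloisField p m)[X] →+* Qr p m t N δ ⧸ Ideal.span {z} :=
    (Ideal.Quotient.mk _).comp ((mkQr p m t N δ).comp (mapRingHom (κ p m t)))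
  have hψ : Function.Surjective ψ := by
    intro y
    obtain ⟨x, rfl⟩ := Ideal.Quotient.mk_surjective y
    obtain ⟨P, rfl⟩ := Ideal.Quotient.mk_surjective x
    obtain ⟨Q, R, hQ⟩ := exists_C_uRt_dvd_sub_map P
    refine ⟨Q, ((Ideal.Quotient.mk_eq_mk_iff_sub_mem _ _).mpr ?_).symm⟩
    rw [Ideal.mem_span_singleton]
    change z ∣ mkQr p m t N δ P - mkQr p m t N δ (Q.map (κ p m t))
    rw [← map_sub, hQ, map_mul]
    exact hu.mul_right _
  have hker : ∀ f ∈ Ideal.span {X ^ n - C a}, ψ f = 0 := by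
    intro f hf
    obtain ⟨g, rfl⟩ := Ideal.mem_span_singleton.mp hf
    have hg : ψ (X ^ n - C a) = 0 := by
      change Ideal.Quotient.mk _ (mkQr p m t N δ ((X ^ n - C a).map (κ p m t))) = 0
      rw [hmap]
      exact Ideal.Quotient.eq_zero_iff_mem.mpr (Ideal.mem_span_singleton_self z)
    rw [map_mul, hg, zero_mul]
  have := AdjoinRoot.finite_of_monic (monic_X_pow_sub_C a hn)
  calc Nat.card (Qr p m t N δ ⧸ Ideal.span {z})
      ≤ Nat.card (AdjoinRoot (X ^ n - C a)) :=
        Nat.card_le_card_of_surjective _ (Ideal.Quotient.lift_surjective_of_surjective _ hker hψ)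
    _ = p ^ (n * m) := by
        rw [AdjoinRoot.natCard_of_monic (monic_X_pow_sub_C a hn), natDegree_X_pow_sub_C,
          GaloisField.card p m hm, ← pow_mul, mul_comm]

end ChainRing

theorem stmt_8_general (p m s t n : ℕ) [Fact p.Prime] (hm : m ≠ 0) (ht : 2 ≤ t)
    (hn : 0 < n)
    (δc : ℕ → GaloisField p m) (hδ1 : δc 1 ≠ 0)
    (δ00 : GaloisField p m) (hδ00 : δ00 ^ p ^ s = δc 0) :
    ∀ i ≤ t * p ^ s,
      Nat.card (Ideal.span {(mkQr p m t (n * p ^ s)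
          (mkRt p m t (∑ i ∈ Finset.range t, C (δc i) * X ^ i))
          (X ^ n - C (κ p m t δ00))) ^ i}) =
        p ^ (n * m * (t * p ^ s - i)) := by
  intro i hi
  set q : (GaloisField p m)[X] := ∑ i ∈ Finset.range t, C (δc i) * X ^ i
  have hcoeff : ∀ j < t, q.coeff j = δc j := fun j hj => by
    simp [q, finsetSum_coeff, hj]
  have hassoc := associated_uRt_sub_κ_coeff_zero (t := t) (q := q) (by rwa [hcoeff 1 (by omega)])
  rw [hcoeff 0 (by omega)] at hassoc
  have hN : n * p ^ s ≠ 0 := mul_ne_zero hn.ne' (pow_ne_zero s (Fact.out : p.Prime).ne_zero)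
  have := nontrivial_Rt (p := p) (m := m) (t := t) (by omega)
  have : Finite (Qr p m t (n * p ^ s) (mkRt p m t q)) :=
    AdjoinRoot.finite_of_monic (monic_X_pow_sub_C _ hN)
  have hcard : Nat.card (Qr p m t (n * p ^ s) (mkRt p m t q)) = (p ^ (n * m)) ^ (t * p ^ s) := by
    refine (AdjoinRoot.natCard_of_monic (monic_X_pow_sub_C _ hN)).trans ?_
    rw [natDegree_X_pow_sub_C, natCard_Rt hm, ← pow_mul, ← pow_mul]
    ring_nf
  have hquot := natCard_quotient_span_mkQr_X_pow_sub_C_le hm hn.ne'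
    (mkQr_X_pow_sub_C_dvd_uRt _ hδ00 hassoc.symm.dvd)
  exact (Ideal.natCard_span_singleton_pow_of_pow_eq_zero hcard
    (mkQr_X_pow_sub_C_pow_eq_zero _ hδ00 hassoc.dvd) hquot hi).trans (pow_mul p _ _).symm

/-- Let `δ ∈ R^t` be a unit such that `xⁿ − δ_{0,0}` is irreducible over
`𝔽_{p^m}` and `δ₁ ≠ 0`.  Then for each `0 ≤ i ≤ tp^s`, the ideal `⟨(xⁿ − δ_{0,0})^i⟩` of
`R^{t,n}_δ` has exactly `p^{nm(tp^s − i)}` elements. -/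
theorem stmt_8 (p m s t n : ℕ) [Fact p.Prime] (hm : m ≠ 0) (ht : 2 ≤ t)
    (hn : 0 < n) (hnp : ¬ p ∣ n)
    (δc : ℕ → GaloisField p m) (hδ0 : δc 0 ≠ 0) (hδ1 : δc 1 ≠ 0)
    (δ00 : GaloisField p m) (hδ00 : δ00 ^ p ^ s = δc 0)
    (hirr : Irreducible ((X : Polynomial (GaloisField p m)) ^ n - C δ00)) :
    ∀ i ≤ t * p ^ s,
      Nat.card (Ideal.span {(mkQr p m t (n * p ^ s)
          (mkRt p m t (∑ i ∈ Finset.range t, C (δc i) * X ^ i))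
          (X ^ n - C (κ p m t δ00))) ^ i}) =
        p ^ (n * m * (t * p ^ s - i)) :=
  stmt_8_general p m s t n hm ht hn δc hδ1 δ00 hδ00
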